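/- arXiv:2109.03582 — 6 statements merged into one kernel-verified Lean document; each statement's English description precedes it below -/
import Mathlib

section
/- Let X and Y be discrete-time stochastic processes with paths in S₁ = E^{T+1}, possibly defined on different probability spaces. Then the second order MMD vanishes, D²(X,Y) = 0 (equivalently μ²_X = μ²_Y), if and only if the laws of the prediction processes of X and of Y coincide as Borel probability measures on 𝒫(E^{T+1})^{T+1}. (This is the first claim of Theorem 3.2 of the paper, with the signature kernel replaced by an arbitrary continuous characteristic feature map.) -/
open MeasureTheory Filter

/-- A map `κ : Ω → Measure S` is a regular conditional distribution of the random element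
`Z : Ω → S` given the σ-algebra generated by `W : Ω → β`, with respect to the probability
measure `P`, if each `κ ω` is a probability measure, `κ` is measurable with respect to
`σ(W) = comap W`, and `∫_A κ ω (B) dP(ω) = P (A ∩ Z⁻¹ B)` for all `A ∈ σ(W)` and Borel `B`. -/
def IsRegCondDistrib {Ω S β : Type*} [MeasurableSpace Ω] [MeasurableSpace S]
    [MeasurableSpace β] (P : Measure Ω) (Z : Ω → S) (W : Ω → β) (κ : Ω → Measure S) : Prop :=
  (∀ ω, IsProbabilityMeasure (κ ω)) ∧
    Measurable[MeasurableSpace.comap W inferInstance] κ ∧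
    ∀ A : Set Ω, MeasurableSet[MeasurableSpace.comap W inferInstance] A →
      ∀ B : Set S, MeasurableSet B → ∫⁻ ω in A, κ ω B ∂P = P (A ∩ Z ⁻¹' B)

/-- The history of the path-valued map `X : Ω → E^{T+1}` up to time `t`, i.e. the map
`ω ↦ (X_0(ω), …, X_t(ω))`; its `comap` is the σ-algebra `𝔉_{X_t}` of the natural filtration. -/
def hist {Ω E : Type*} (T : ℕ) (X : Ω → (Fin (T + 1) → E)) (t : Fin (T + 1)) :
    Ω → ({s : Fin (T + 1) // s ≤ t} → E) :=
  fun ω s => X ω s.1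

lemma aux_measurable_integral {S H : Type*} [MeasurableSpace S]
    [NormedAddCommGroup H] [NormedSpace ℝ H] [CompleteSpace H] [MeasurableSpace H]
    [BorelSpace H] [SecondCountableTopology H]
    {φ : S → H} (hφ : Measurable φ)
    (hint : ∀ μ : Measure S, IsProbabilityMeasure μ → Integrable φ μ) :
    Measurable (fun μ : Measure S => if μ Set.univ = 1 then ∫ x, φ x ∂μ else 0) := by
  classical
  have hPM : MeasurableSet {μ : Measure S | μ Set.univ = 1} :=
    Measure.measurable_coe MeasurableSet.univ (measurableSet_singleton 1)
  set ψ : ℕ → SimpleFunc S H :=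
    fun n => SimpleFunc.approxOn φ hφ Set.univ 0 (Set.mem_univ 0) n with hψ
  have hFmeas : ∀ n, Measurable
      (fun μ : Measure S => if μ Set.univ = 1 then (ψ n).integral μ else 0) := by
    intro n
    refine Measurable.ite hPM ?_ measurable_const
    have h : (fun μ : Measure S => (ψ n).integral μ)
        = fun μ => ∑ x ∈ (ψ n).range, (μ ((ψ n) ⁻¹' {x})).toReal • x := by
      funext μ; exact SimpleFunc.integral_eq μ (ψ n)
    rw [h]
    exact Finset.measurable_sum _ fun x _ =>
      ((Measure.measurable_coe ((ψ n).measurableSet_preimage {x})).ennreal_toReal).smul_const x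
  refine measurable_of_tendsto_metrizable' atTop hFmeas (tendsto_pi_nhds.mpr fun μ => ?_)
  by_cases hμ : μ Set.univ = 1
  · haveI : IsProbabilityMeasure μ := ⟨hμ⟩
    simp only [hμ, if_pos]
    have hφint := hint μ this
    have hψint : ∀ n, Integrable (ψ n) μ := fun n =>
      (hφint.norm.add hφint.norm).mono' (ψ n).aestronglyMeasurable
        (Eventually.of_forall fun x => SimpleFunc.norm_approxOn_zero_le hφ _ x n)
    have he : ∀ n, (ψ n).integral μ = ∫ x, ψ n x ∂μ := fun n =>
      SimpleFunc.integral_eq_integral _ (hψint n)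
    simp_rw [he]
    exact tendsto_integral_of_dominated_convergence (fun x => ‖φ x‖ + ‖φ x‖)
      (fun n => (ψ n).aestronglyMeasurable) (hφint.norm.add hφint.norm)
      (fun n => Eventually.of_forall fun x => SimpleFunc.norm_approxOn_zero_le hφ _ x n)
      (Eventually.of_forall fun x => SimpleFunc.tendsto_approxOn hφ _ (by simp))
  · simp only [hμ, if_neg, if_false]
    exact tendsto_const_nhds

lemma IsRegCondDistrib.ae_eq {Ω S β : Type*} [MeasurableSpace Ω] [MeasurableSpace S]
    [MeasurableSpace β] [MeasurableSpace.CountablyGenerated S]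
    {P : Measure Ω} [IsProbabilityMeasure P] {Z : Ω → S} {W : Ω → β} (hW : Measurable W)
    {κ₁ κ₂ : Ω → Measure S} (h₁ : IsRegCondDistrib P Z W κ₁) (h₂ : IsRegCondDistrib P Z W κ₂) :
    κ₁ =ᵐ[P] κ₂ := by
  have hm : MeasurableSpace.comap W inferInstance ≤ ‹MeasurableSpace Ω› :=
    measurable_iff_comap_le.mp hW
  have key : ∀ B : Set S, MeasurableSet B →
      (fun ω => κ₁ ω B) =ᵐ[P] fun ω => κ₂ ω B := by
    intro B hB
    have hf : Measurable[MeasurableSpace.comap W inferInstance] fun ω => κ₁ ω B :=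
      (Measure.measurable_coe hB).comp h₁.2.1
    have hg : Measurable[MeasurableSpace.comap W inferInstance] fun ω => κ₂ ω B :=
      (Measure.measurable_coe hB).comp h₂.2.1
    refine ae_eq_of_ae_eq_trim (hm := hm) ?_
    haveI : IsFiniteMeasure (P.trim hm) := isFiniteMeasure_trim hm
    refine ae_eq_of_forall_setLIntegral_eq_of_sigmaFinite hf hg fun s hs _ => ?_
    have e1 : ∫⁻ ω in s, κ₁ ω B ∂(P.trim hm) = ∫⁻ ω in s, κ₁ ω B ∂P := by
      rw [restrict_trim hm P hs, lintegral_trim hm hf]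
    have e2 : ∫⁻ ω in s, κ₂ ω B ∂(P.trim hm) = ∫⁻ ω in s, κ₂ ω B ∂P := by
      rw [restrict_trim hm P hs, lintegral_trim hm hg]
    rw [e1, e2, h₁.2.2 s hs B hB, h₂.2.2 s hs B hB]
  classical
  set e : ℕ → Set S := MeasurableSpace.natGeneratingSequence S with he
  set C : Set (Set S) := Set.range (fun F : Finset ℕ => ⋂ i ∈ F, e i) with hC
  have hCc : C.Countable := Set.countable_range _
  have hCmeas : ∀ s ∈ C, MeasurableSet s := by
    rintro s ⟨F, rfl⟩
    exact MeasurableSet.biInter (F : Set ℕ).to_countable fun i _ =>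
      MeasurableSpace.measurableSet_natGeneratingSequence (α := S) i
  have hCpi : IsPiSystem C := by
    rintro s ⟨F, rfl⟩ t ⟨G, rfl⟩ -
    refine ⟨F ∪ G, ?_⟩
    ext x
    simp only [Set.mem_iInter, Finset.mem_union, Set.mem_inter_iff]
    exact ⟨fun h => ⟨fun i hi => h i (Or.inl hi), fun i hi => h i (Or.inr hi)⟩,
      fun h i hi => hi.elim (h.1 i) (h.2 i)⟩
  have hgen : (inferInstance : MeasurableSpace S) = MeasurableSpace.generateFrom C := by
    refine le_antisymm ?_ (MeasurableSpace.generateFrom_le hCmeas)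
    conv_lhs => rw [← MeasurableSpace.generateFrom_natGeneratingSequence S]
    refine MeasurableSpace.generateFrom_mono ?_
    rintro s ⟨n, rfl⟩
    exact ⟨{n}, by simp [he]⟩
  have hall : ∀ᵐ ω ∂P, ∀ s ∈ C, κ₁ ω s = κ₂ ω s :=
    (ae_ball_iff hCc).mpr fun s hs => key s (hCmeas s hs)
  filter_upwards [hall] with ω hω
  haveI := h₁.1 ω; haveI := h₂.1 ω
  exact ext_of_generate_finite C hgen hCpi hω (by simp)

lemma exists_pathFunc_version {E : Type*} [MetricSpace E] [CompactSpace E] [MeasurableSpace E]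
    [BorelSpace E] (T : ℕ)
    {Ω : Type*} [MeasurableSpace Ω] (P : Measure Ω) [IsProbabilityMeasure P]
    (X : Ω → (Fin (T + 1) → E)) (hX : Measurable X)
    (MX : Fin (T + 1) → Ω → Measure (Fin (T + 1) → E))
    (hMX : ∀ t, IsRegCondDistrib P X (hist T X t) (MX t)) :
    ∃ Ψ : (Fin (T + 1) → E) → (Fin (T + 1) → Measure (Fin (T + 1) → E)),
      Measurable Ψ ∧ (∀ x t, IsProbabilityMeasure (Ψ x t)) ∧
      (∀ x, Ψ x (Fin.last T) = Measure.dirac x) ∧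
      (fun ω t => MX t ω) =ᵐ[P] fun ω => Ψ (X ω) := by
  classical
  haveI : Nonempty Ω := by
    by_contra h
    rw [not_nonempty_iff] at h
    have h1 : P Set.univ = 1 := measure_univ
    rw [Set.univ_eq_empty_iff.mpr h] at h1
    simp at h1
  haveI : Nonempty (Fin (T + 1) → E) := ⟨X (Classical.arbitrary Ω)⟩
  have hhist : ∀ t, Measurable (hist T X t) := fun t =>
    measurable_pi_lambda _ fun s => (measurable_pi_apply s.1).comp hX
  let κ : (t : Fin (T + 1)) →
      ProbabilityTheory.Kernel ({s : Fin (T + 1) // s ≤ t} → E) (Fin (T + 1) → E) :=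
    fun t => ProbabilityTheory.condDistrib X (hist T X t) P
  let Ψ : (Fin (T + 1) → E) → (Fin (T + 1) → Measure (Fin (T + 1) → E)) :=
    fun x t => if t = Fin.last T then Measure.dirac x else κ t (fun s => x s.1)
  have hΨprob : ∀ x t, IsProbabilityMeasure (Ψ x t) := by
    intro x t
    by_cases h : t = Fin.last T
    · simp only [Ψ, if_pos h]; infer_instance
    · simp only [Ψ, if_neg h]; infer_instance
  refine ⟨Ψ, ?_, hΨprob, ?_, ?_⟩
  · refine measurable_pi_lambda _ fun t => ?_
    by_cases h : t = Fin.last T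
    · simpa only [Ψ, if_pos h] using Measure.measurable_dirac
    · simpa only [Ψ, if_neg h, Function.comp_def] using
        (κ t).measurable.comp (measurable_pi_lambda _ fun s => measurable_pi_apply s.1)
  · intro x; simp only [Ψ, if_pos rfl]
  · have key : ∀ t, (fun ω => MX t ω) =ᵐ[P] fun ω => Ψ (X ω) t := by
      intro t
      by_cases h : t = Fin.last T
      · subst h
        have hd : IsRegCondDistrib P X (hist T X (Fin.last T))
            (fun ω => Measure.dirac (X ω)) := by
          have hXc : Measurable[MeasurableSpace.comap (hist T X (Fin.last T)) inferInstance] X := by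
            have hrepr : X = (fun (h : {s : Fin (T + 1) // s ≤ Fin.last T} → E)
                (i : Fin (T + 1)) => h ⟨i, Fin.le_last i⟩) ∘ (hist T X (Fin.last T)) := rfl
            rw [hrepr]
            exact (measurable_pi_lambda _ fun i => measurable_pi_apply _).comp
              (measurable_iff_comap_le.mpr le_rfl)
          refine ⟨fun ω => inferInstance, Measure.measurable_dirac.comp hXc, ?_⟩
          intro A hA B hB
          have hAm : MeasurableSet A := measurable_iff_comap_le.mp (hhist _) A hA
          calc ∫⁻ ω in A, (Measure.dirac (X ω)) B ∂P
              = ∫⁻ ω in A, (X ⁻¹' B).indicator (fun _ => (1 : ENNReal)) ω ∂P := by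
                refine lintegral_congr fun ω => ?_
                rw [Measure.dirac_apply' _ hB]
                by_cases hx : X ω ∈ B <;> simp [Set.indicator_apply, hx]
            _ = P (A ∩ X ⁻¹' B) := by
                rw [lintegral_indicator (hX hB), setLIntegral_one,
                  Measure.restrict_apply (hX hB), Set.inter_comm]
        have hae := (hMX (Fin.last T)).ae_eq (hhist _) hd
        filter_upwards [hae] with ω hω
        simpa only [Ψ, if_pos rfl] using hω
      · have hc : IsRegCondDistrib P X (hist T X t) (fun ω => κ t (hist T X t ω)) := by
          refine ⟨fun ω => inferInstance,
            (κ t).measurable.comp (measurable_iff_comap_le.mpr le_rfl), ?_⟩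
          intro A hA B hB
          exact ProbabilityTheory.setLIntegral_condDistrib_of_measurableSet (hhist t)
            hX.aemeasurable hB hA
        have hae := (hMX t).ae_eq (hhist t) hc
        filter_upwards [hae] with ω hω
        simp only [Ψ, if_neg h]; exact hω
    have hall := ae_all_iff.mpr key
    filter_upwards [hall] with ω hω
    funext t
    exact hω t

/-- Let `X, Y` be discrete-time stochastic processes with paths in
`S₁ = E^{T+1}` (`E` compact metric), possibly defined on different probability spaces.
Let `φ₁ : S₁ → H₁` be a continuous characteristic feature map, `K₁` the closed convex hull of
its range, and `φ₂` a feature map on `S₂ = K₁^{T+1}` which is continuous and characteristic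
there.  Let `MX, MY` be prediction processes (regular conditional distributions given the
natural filtrations) of `X` and `Y`, and `ΦX, ΦY` the associated first order predictive KMEs,
`ΦX ω t = M₁(MX t ω)`.  Then the second order MMD vanishes, i.e.
`‖μ²_X - μ²_Y‖ = 0` where `μ²_X = M₂(law of ΦX)`, if and only if the laws of the prediction
processes of `X` and of `Y` coincide as Borel probability measures on `𝒫(E^{T+1})^{T+1}`. -/
theorem second_order_mmd_eq_zero_iff_prediction_laws_eq
    {E : Type*} [MetricSpace E] [CompactSpace E] [MeasurableSpace E] [BorelSpace E]
    (T : ℕ)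
    {H₁ : Type*} [NormedAddCommGroup H₁] [InnerProductSpace ℝ H₁] [CompleteSpace H₁]
    [SecondCountableTopology H₁] [MeasurableSpace H₁] [BorelSpace H₁]
    {H₂ : Type*} [NormedAddCommGroup H₂] [InnerProductSpace ℝ H₂] [CompleteSpace H₂]
    [SecondCountableTopology H₂]
    (φ₁ : (Fin (T + 1) → E) → H₁) (hφ₁c : Continuous φ₁)
    (hφ₁char : ∀ μ ν : Measure (Fin (T + 1) → E), IsProbabilityMeasure μ →
      IsProbabilityMeasure ν → (∫ x, φ₁ x ∂μ) = ∫ x, φ₁ x ∂ν → μ = ν)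
    (φ₂ : (Fin (T + 1) → H₁) → H₂)
    (hφ₂c : ContinuousOn φ₂ {f | ∀ t, f t ∈ closure (convexHull ℝ (Set.range φ₁))})
    (hφ₂char : ∀ μ ν : Measure (Fin (T + 1) → H₁), IsProbabilityMeasure μ →
      IsProbabilityMeasure ν →
      μ {f | ∀ t, f t ∈ closure (convexHull ℝ (Set.range φ₁))} = 1 →
      ν {f | ∀ t, f t ∈ closure (convexHull ℝ (Set.range φ₁))} = 1 →
      (∫ f, φ₂ f ∂μ) = ∫ f, φ₂ f ∂ν → μ = ν)
    {Ω : Type*} [MeasurableSpace Ω] (P : Measure Ω) [IsProbabilityMeasure P]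
    {Ω' : Type*} [MeasurableSpace Ω'] (Q : Measure Ω') [IsProbabilityMeasure Q]
    (X : Ω → (Fin (T + 1) → E)) (hX : Measurable X)
    (Y : Ω' → (Fin (T + 1) → E)) (hY : Measurable Y)
    (MX : Fin (T + 1) → Ω → Measure (Fin (T + 1) → E))
    (hMX : ∀ t, IsRegCondDistrib P X (hist T X t) (MX t))
    (MY : Fin (T + 1) → Ω' → Measure (Fin (T + 1) → E))
    (hMY : ∀ t, IsRegCondDistrib Q Y (hist T Y t) (MY t))
    (ΦX : Ω → (Fin (T + 1) → H₁)) (hΦX : ∀ ω t, ΦX ω t = ∫ x, φ₁ x ∂(MX t ω))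
    (hΦXm : Measurable ΦX)
    (ΦY : Ω' → (Fin (T + 1) → H₁)) (hΦY : ∀ ω t, ΦY ω t = ∫ x, φ₁ x ∂(MY t ω))
    (hΦYm : Measurable ΦY) :
    ‖(∫ f, φ₂ f ∂(P.map ΦX)) - ∫ f, φ₂ f ∂(Q.map ΦY)‖ = 0 ↔
      P.map (fun ω t => MX t ω) = Q.map (fun ω t => MY t ω) := by
  classical
  haveI hΩne : Nonempty Ω := by
    by_contra h
    rw [not_nonempty_iff] at h
    have h1 : P Set.univ = 1 := measure_univ
    rw [Set.univ_eq_empty_iff.mpr h] at h1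
    simp at h1
  haveI : Nonempty (Fin (T + 1) → E) := ⟨X (Classical.arbitrary Ω)⟩
  have hφ₁m : Measurable φ₁ := hφ₁c.measurable
  have hint : ∀ μ : Measure (Fin (T + 1) → E), IsProbabilityMeasure μ → Integrable φ₁ μ := by
    intro μ hμ
    haveI := hμ
    exact hφ₁c.integrable_of_hasCompactSupport
      (IsCompact.of_isClosed_subset isCompact_univ (isClosed_tsupport φ₁) (Set.subset_univ _))
  let g : Measure (Fin (T + 1) → E) → H₁ :=
    fun μ => if μ Set.univ = 1 then ∫ x, φ₁ x ∂μ else 0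
  have hg : Measurable g := aux_measurable_integral hφ₁m hint
  have hgPM : ∀ (μ : Measure (Fin (T + 1) → E)), IsProbabilityMeasure μ →
      g μ = ∫ x, φ₁ x ∂μ := by
    intro μ hμ
    haveI := hμ
    exact if_pos measure_univ
  obtain ⟨Ψ, hΨm, hΨprob, hΨlast, hΨae⟩ := exists_pathFunc_version T P X hX MX hMX
  obtain ⟨Ψ', hΨ'm, hΨ'prob, hΨ'last, hΨ'ae⟩ := exists_pathFunc_version T Q Y hY MY hMY
  let Θ : (Fin (T + 1) → E) → (Fin (T + 1) → H₁) := fun x t => g (Ψ x t)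
  let Θ' : (Fin (T + 1) → E) → (Fin (T + 1) → H₁) := fun x t => g (Ψ' x t)
  have hΘm : Measurable Θ :=
    measurable_pi_lambda _ fun t => hg.comp ((measurable_pi_apply t).comp hΨm)
  have hΘ'm : Measurable Θ' :=
    measurable_pi_lambda _ fun t => hg.comp ((measurable_pi_apply t).comp hΨ'm)
  have hφ₁inj : Function.Injective φ₁ := by
    intro a b hab
    have h1 : (Measure.dirac a : Measure (Fin (T + 1) → E)) = Measure.dirac b := by
      refine hφ₁char _ _ inferInstance inferInstance ?_
      rw [integral_dirac _ a, integral_dirac _ b, hab]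
    by_contra hne
    have h2 := congrArg (fun μ : Measure (Fin (T + 1) → E) => μ {a}) h1
    simp only [Measure.dirac_apply' _ (measurableSet_singleton a)] at h2
    simp [Set.indicator_apply, hne, Ne.symm hne] at h2
  have hglast : ∀ x : Fin (T + 1) → E, g (Measure.dirac x) = φ₁ x := by
    intro x
    rw [hgPM _ inferInstance, integral_dirac]
  have hΘinj : Function.Injective Θ := by
    intro a b hab
    have h1 : Θ a (Fin.last T) = Θ b (Fin.last T) := congrFun hab _
    simp only [Θ, hΨlast, hglast] at h1
    exact hφ₁inj h1
  have hΘ'inj : Function.Injective Θ' := by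
    intro a b hab
    have h1 : Θ' a (Fin.last T) = Θ' b (Fin.last T) := congrFun hab _
    simp only [Θ', hΨ'last, hglast] at h1
    exact hφ₁inj h1
  have hΘae : ΦX =ᵐ[P] fun ω => Θ (X ω) := by
    filter_upwards [hΨae] with ω hω
    funext t
    have h1 : MX t ω = Ψ (X ω) t := congrFun hω t
    rw [hΦX ω t, h1]
    exact (hgPM _ (hΨprob _ _)).symm
  have hΘ'ae : ΦY =ᵐ[Q] fun ω => Θ' (Y ω) := by
    filter_upwards [hΨ'ae] with ω hω
    funext t
    have h1 : MY t ω = Ψ' (Y ω) t := congrFun hω t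
    rw [hΦY ω t, h1]
    exact (hgPM _ (hΨ'prob _ _)).symm
  have hmapN : P.map (fun ω t => MX t ω) = (P.map X).map Ψ := by
    rw [Measure.map_congr hΨae]
    exact (Measure.map_map hΨm hX).symm
  have hmapN' : Q.map (fun ω t => MY t ω) = (Q.map Y).map Ψ' := by
    rw [Measure.map_congr hΨ'ae]
    exact (Measure.map_map hΨ'm hY).symm
  have hmapΦ : P.map ΦX = (P.map X).map Θ := by
    rw [Measure.map_congr hΘae]
    exact (Measure.map_map hΘm hX).symm
  have hmapΦ' : Q.map ΦY = (Q.map Y).map Θ' := by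
    rw [Measure.map_congr hΘ'ae]
    exact (Measure.map_map hΘ'm hY).symm
  haveI : IsProbabilityMeasure (P.map X) := Measure.isProbabilityMeasure_map hX.aemeasurable
  haveI : IsProbabilityMeasure (Q.map Y) := Measure.isProbabilityMeasure_map hY.aemeasurable
  haveI : IsProbabilityMeasure (P.map ΦX) := Measure.isProbabilityMeasure_map hΦXm.aemeasurable
  haveI : IsProbabilityMeasure (Q.map ΦY) := Measure.isProbabilityMeasure_map hΦYm.aemeasurable
  constructor
  · intro h
    have hint2 : (∫ f, φ₂ f ∂(P.map ΦX)) = ∫ f, φ₂ f ∂(Q.map ΦY) :=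
      sub_eq_zero.mp (norm_eq_zero.mp h)
    have hKclosed : IsClosed {f : Fin (T + 1) → H₁ |
        ∀ t, f t ∈ closure (convexHull ℝ (Set.range φ₁))} := by
      have hrepr : {f : Fin (T + 1) → H₁ | ∀ t, f t ∈ closure (convexHull ℝ (Set.range φ₁))}
          = ⋂ t, (fun f : Fin (T + 1) → H₁ => f t) ⁻¹' closure (convexHull ℝ (Set.range φ₁)) := by
        ext f; simp [Set.mem_iInter]
      rw [hrepr]
      exact isClosed_iInter fun t => isClosed_closure.preimage (continuous_apply t)
    have hmem : ∀ (μ : Measure (Fin (T + 1) → E)), IsProbabilityMeasure μ →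
        (∫ x, φ₁ x ∂μ) ∈ closure (convexHull ℝ (Set.range φ₁)) := by
      intro μ hμ
      haveI := hμ
      exact Convex.integral_mem ((convex_convexHull ℝ _).closure) isClosed_closure
        (Filter.Eventually.of_forall fun x =>
          subset_closure (subset_convexHull ℝ _ (Set.mem_range_self x))) (hint μ hμ)
    have hK1 : (P.map ΦX) {f : Fin (T + 1) → H₁ |
        ∀ t, f t ∈ closure (convexHull ℝ (Set.range φ₁))} = 1 := by
      rw [Measure.map_apply hΦXm hKclosed.measurableSet]
      have hall : ΦX ⁻¹' {f : Fin (T + 1) → H₁ |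
          ∀ t, f t ∈ closure (convexHull ℝ (Set.range φ₁))} = Set.univ := by
        ext ω
        simp only [Set.mem_preimage, Set.mem_univ, iff_true, Set.mem_setOf_eq]
        intro t
        rw [hΦX ω t]
        exact hmem _ ((hMX t).1 ω)
      rw [hall]
      exact measure_univ
    have hK1' : (Q.map ΦY) {f : Fin (T + 1) → H₁ |
        ∀ t, f t ∈ closure (convexHull ℝ (Set.range φ₁))} = 1 := by
      rw [Measure.map_apply hΦYm hKclosed.measurableSet]
      have hall : ΦY ⁻¹' {f : Fin (T + 1) → H₁ |
          ∀ t, f t ∈ closure (convexHull ℝ (Set.range φ₁))} = Set.univ := by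
        ext ω
        simp only [Set.mem_preimage, Set.mem_univ, iff_true, Set.mem_setOf_eq]
        intro t
        rw [hΦY ω t]
        exact hmem _ ((hMY t).1 ω)
      rw [hall]
      exact measure_univ
    have heq : P.map ΦX = Q.map ΦY :=
      hφ₂char _ _ inferInstance inferInstance hK1 hK1' hint2
    have hΘemb : MeasurableEmbedding Θ := hΘm.measurableEmbedding hΘinj
    have hΘ'emb : MeasurableEmbedding Θ' := hΘ'm.measurableEmbedding hΘ'inj
    obtain ⟨u, hum, hu⟩ := hΘemb.exists_measurable_extend hΨm
      (fun _ => ⟨fun _ => (0 : Measure (Fin (T + 1) → E))⟩)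
    obtain ⟨v, hvm, hv⟩ := hΘ'emb.exists_measurable_extend hΨ'm
      (fun _ => ⟨fun _ => (0 : Measure (Fin (T + 1) → E))⟩)
    have hrangeX : ∀ᵐ z ∂(P.map ΦX), z ∈ Set.range Θ := by
      have h0 : (P.map ΦX) (Set.range Θ)ᶜ = 0 := by
        rw [hmapΦ, Measure.map_apply hΘm hΘemb.measurableSet_range.compl]
        have he : Θ ⁻¹' (Set.range Θ)ᶜ = ∅ := by
          ext x; simp [Set.mem_preimage]
        rw [he, measure_empty]
      rw [ae_iff]
      exact h0
    have hrangeY : ∀ᵐ z ∂(P.map ΦX), z ∈ Set.range Θ' := by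
      have h0 : (P.map ΦX) (Set.range Θ')ᶜ = 0 := by
        rw [heq, hmapΦ', Measure.map_apply hΘ'm hΘ'emb.measurableSet_range.compl]
        have he : Θ' ⁻¹' (Set.range Θ')ᶜ = ∅ := by
          ext x; simp [Set.mem_preimage]
        rw [he, measure_empty]
      rw [ae_iff]
      exact h0
    have huv : u =ᵐ[P.map ΦX] v := by
      filter_upwards [hrangeX, hrangeY] with z hzX hzY
      obtain ⟨x, rfl⟩ := hzX
      obtain ⟨y, hy⟩ := hzY
      have h1 : u (Θ x) = Ψ x := congrFun hu x
      have h2 : v (Θ' y) = Ψ' y := congrFun hv y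
      have h3 : Ψ x = Ψ' y := by
        funext t
        refine hφ₁char _ _ (hΨprob x t) (hΨ'prob y t) ?_
        have e1 : g (Ψ x t) = g (Ψ' y t) := (congrFun hy t).symm
        rwa [hgPM _ (hΨprob x t), hgPM _ (hΨ'prob y t)] at e1
      rw [h1, ← hy, h2, h3]
    calc P.map (fun ω t => MX t ω) = (P.map X).map Ψ := hmapN
      _ = (P.map X).map (u ∘ Θ) := by rw [hu]
      _ = ((P.map X).map Θ).map u := (Measure.map_map hum hΘm).symm
      _ = (P.map ΦX).map u := by rw [hmapΦ]
      _ = (P.map ΦX).map v := Measure.map_congr huv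
      _ = ((Q.map Y).map Θ').map v := by rw [heq, hmapΦ']
      _ = (Q.map Y).map (v ∘ Θ') := Measure.map_map hvm hΘ'm
      _ = (Q.map Y).map Ψ' := by rw [hv]
      _ = Q.map (fun ω t => MY t ω) := hmapN'.symm
  · intro h
    have hGm : Measurable (fun (m : Fin (T + 1) → Measure (Fin (T + 1) → E)) (t : Fin (T + 1)) =>
        g (m t)) := measurable_pi_lambda _ fun t => hg.comp (measurable_pi_apply t)
    have heq : P.map ΦX = Q.map ΦY := by
      rw [hmapΦ, hmapΦ']
      have eX : Θ = (fun m (t : Fin (T + 1)) => g (m t)) ∘ Ψ := rfl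
      have eY : Θ' = (fun m (t : Fin (T + 1)) => g (m t)) ∘ Ψ' := rfl
      rw [eX, eY, ← Measure.map_map hGm hΨm, ← Measure.map_map hGm hΨ'm, ← hmapN, ← hmapN', h]
    rw [heq, sub_self, norm_zero]
end

section
/- Let X and Y be discrete-time stochastic processes with paths in S₁ = E^{T+1}, possibly defined on different probability spaces. If the second order MMD vanishes, D²(X,Y) = 0, then the first order MMD vanishes as well: μ¹_X = μ¹_Y in H₁, and consequently ℙ_X = ℙ_Y. (This is the second claim of Theorem 3.2 of the paper, with the signature kernel replaced by an arbitrary continuous characteristic feature map.) -/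
open MeasureTheory Filter

open ProbabilityTheory in
private lemma tower_aux {Ω S G : Type*} [MeasurableSpace Ω] [MeasurableSpace S]
    [NormedAddCommGroup G] [NormedSpace ℝ G]
    (P : Measure Ω) [IsProbabilityMeasure P] (ν : Measure S)
    (κ : Ω → Measure S) (hκm : Measurable κ) (hκp : ∀ ω, IsProbabilityMeasure (κ ω))
    (hd : ∀ B : Set S, MeasurableSet B → ∫⁻ ω, κ ω B ∂P = ν B)
    (g : S → G) (hg : StronglyMeasurable g) (C : ℝ) (hC : ∀ x, ‖g x‖ ≤ C) :
    ∫ ω, ∫ x, g x ∂κ ω ∂P = ∫ x, g x ∂ν := by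
  let K : Kernel Ω S := ⟨κ, hκm⟩
  haveI : IsMarkovKernel K := ⟨hκp⟩
  have hKapp : ∀ ω, K ω = κ ω := fun _ => rfl
  have hsnd : (P ⊗ₘ K).map Prod.snd = ν := by
    ext B hB
    rw [Measure.map_apply measurable_snd hB, Measure.compProd_apply (measurable_snd hB)]
    simp only [hKapp]
    have : ∀ a : Ω, (Prod.mk a) ⁻¹' (Prod.snd ⁻¹' B) = B := fun a => rfl
    simp only [this]
    exact hd B hB
  haveI : IsFiniteMeasure (P ⊗ₘ K) := by
    constructor
    rw [Measure.compProd_apply_univ]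
    simp
  have hint : Integrable (fun z : Ω × S => g z.2) (P ⊗ₘ K) :=
    Integrable.mono' (integrable_const C)
      (hg.comp_measurable measurable_snd).aestronglyMeasurable
      (Filter.Eventually.of_forall fun z => hC z.2)
  calc ∫ ω, ∫ x, g x ∂κ ω ∂P = ∫ z : Ω × S, g z.2 ∂(P ⊗ₘ K) :=
        (Measure.integral_compProd hint).symm
    _ = ∫ x, g x ∂((P ⊗ₘ K).map Prod.snd) :=
        (integral_map measurable_snd.aemeasurable hg.aestronglyMeasurable).symm
    _ = ∫ x, g x ∂ν := by rw [hsnd]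

/-- With the same setting as Statement 0 (processes `X, Y` with paths in
`S₁ = E^{T+1}`, continuous characteristic feature maps `φ₁` on `S₁` and `φ₂` on `S₂ = K₁^{T+1}`,
prediction processes `MX, MY` and first order predictive KMEs `ΦX, ΦY`): if the second order
MMD vanishes, `‖μ²_X - μ²_Y‖ = 0`, then the first order MMD vanishes as well, i.e.
`μ¹_X = μ¹_Y` in `H₁`, and consequently the laws of `X` and `Y` coincide: `ℙ_X = ℙ_Y`. -/

theorem second_order_mmd_eq_zero_implies_first_order
    {E : Type*} [MetricSpace E] [CompactSpace E] [MeasurableSpace E] [BorelSpace E]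
    (T : ℕ)
    {H₁ : Type*} [NormedAddCommGroup H₁] [InnerProductSpace ℝ H₁] [CompleteSpace H₁]
    [SecondCountableTopology H₁] [MeasurableSpace H₁] [BorelSpace H₁]
    {H₂ : Type*} [NormedAddCommGroup H₂] [InnerProductSpace ℝ H₂] [CompleteSpace H₂]
    [SecondCountableTopology H₂]
    (φ₁ : (Fin (T + 1) → E) → H₁) (hφ₁c : Continuous φ₁)
    (hφ₁char : ∀ μ ν : Measure (Fin (T + 1) → E), IsProbabilityMeasure μ →
      IsProbabilityMeasure ν → (∫ x, φ₁ x ∂μ) = ∫ x, φ₁ x ∂ν → μ = ν)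
    (φ₂ : (Fin (T + 1) → H₁) → H₂)
    (hφ₂c : ContinuousOn φ₂ {f | ∀ t, f t ∈ closure (convexHull ℝ (Set.range φ₁))})
    (hφ₂char : ∀ μ ν : Measure (Fin (T + 1) → H₁), IsProbabilityMeasure μ →
      IsProbabilityMeasure ν →
      μ {f | ∀ t, f t ∈ closure (convexHull ℝ (Set.range φ₁))} = 1 →
      ν {f | ∀ t, f t ∈ closure (convexHull ℝ (Set.range φ₁))} = 1 →
      (∫ f, φ₂ f ∂μ) = ∫ f, φ₂ f ∂ν → μ = ν)
    {Ω : Type*} [MeasurableSpace Ω] (P : Measure Ω) [IsProbabilityMeasure P]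
    {Ω' : Type*} [MeasurableSpace Ω'] (Q : Measure Ω') [IsProbabilityMeasure Q]
    (X : Ω → (Fin (T + 1) → E)) (hX : Measurable X)
    (Y : Ω' → (Fin (T + 1) → E)) (hY : Measurable Y)
    (MX : Fin (T + 1) → Ω → Measure (Fin (T + 1) → E))
    (hMX : ∀ t, IsRegCondDistrib P X (hist T X t) (MX t))
    (MY : Fin (T + 1) → Ω' → Measure (Fin (T + 1) → E))
    (hMY : ∀ t, IsRegCondDistrib Q Y (hist T Y t) (MY t))
    (ΦX : Ω → (Fin (T + 1) → H₁)) (hΦX : ∀ ω t, ΦX ω t = ∫ x, φ₁ x ∂(MX t ω))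
    (hΦXm : Measurable ΦX)
    (ΦY : Ω' → (Fin (T + 1) → H₁)) (hΦY : ∀ ω t, ΦY ω t = ∫ x, φ₁ x ∂(MY t ω))
    (hΦYm : Measurable ΦY)
    (h : ‖(∫ f, φ₂ f ∂(P.map ΦX)) - ∫ f, φ₂ f ∂(Q.map ΦY)‖ = 0) :
    (∫ x, φ₁ x ∂(P.map X)) = (∫ x, φ₁ x ∂(Q.map Y)) ∧ P.map X = Q.map Y := by
  
  -- notation
  set Kset : Set (Fin (T + 1) → H₁) :=
    {f | ∀ t, f t ∈ closure (convexHull ℝ (Set.range φ₁))} with hKset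
  have hCconv : Convex ℝ (closure (convexHull ℝ (Set.range φ₁))) :=
    (convex_convexHull ℝ _).closure
  have hCclosed : IsClosed (closure (convexHull ℝ (Set.range φ₁))) := isClosed_closure
  -- bound on φ₁
  obtain ⟨C, hC⟩ : ∃ C, ∀ x ∈ Set.univ, ‖φ₁ x‖ ≤ C :=
    isCompact_univ.exists_bound_of_continuousOn hφ₁c.continuousOn
  have hφ₁sm : StronglyMeasurable φ₁ := hφ₁c.stronglyMeasurable
  have hφ₁int : ∀ (μ : Measure (Fin (T + 1) → E)) [IsProbabilityMeasure μ],
      Integrable φ₁ μ := fun μ _ =>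
    Integrable.mono' (integrable_const C) hφ₁sm.aestronglyMeasurable
      (Filter.Eventually.of_forall fun x => hC x trivial)
  -- Kset is measurable and closed
  have hKclosed : IsClosed Kset := by
    have : Kset = ⋂ t, (fun f : Fin (T + 1) → H₁ => f t) ⁻¹'
        closure (convexHull ℝ (Set.range φ₁)) := by
      ext f; simp [hKset, Set.mem_iInter]
    rw [this]
    exact isClosed_iInter fun t => hCclosed.preimage (continuous_apply t)
  have hKmeas : MeasurableSet Kset := hKclosed.measurableSet
  -- ΦX and ΦY take values in Kset
  have hXmem : ∀ ω, ΦX ω ∈ Kset := by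
    intro ω t
    haveI := (hMX t).1 ω
    rw [hΦX ω t]
    exact hCconv.integral_mem hCclosed
      (Filter.Eventually.of_forall fun x =>
        subset_closure (subset_convexHull ℝ _ (Set.mem_range_self x)))
      (hφ₁int _)
  have hYmem : ∀ ω, ΦY ω ∈ Kset := by
    intro ω t
    haveI := (hMY t).1 ω
    rw [hΦY ω t]
    exact hCconv.integral_mem hCclosed
      (Filter.Eventually.of_forall fun x =>
        subset_closure (subset_convexHull ℝ _ (Set.mem_range_self x)))
      (hφ₁int _)
  haveI : IsProbabilityMeasure (P.map ΦX) := Measure.isProbabilityMeasure_map hΦXm.aemeasurable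
  haveI : IsProbabilityMeasure (Q.map ΦY) := Measure.isProbabilityMeasure_map hΦYm.aemeasurable
  haveI : IsProbabilityMeasure (P.map X) := Measure.isProbabilityMeasure_map hX.aemeasurable
  haveI : IsProbabilityMeasure (Q.map Y) := Measure.isProbabilityMeasure_map hY.aemeasurable
  have hPK : (P.map ΦX) Kset = 1 := by
    rw [Measure.map_apply hΦXm hKmeas]
    have : ΦX ⁻¹' Kset = Set.univ := Set.eq_univ_of_forall hXmem
    rw [this]; exact measure_univ
  have hQK : (Q.map ΦY) Kset = 1 := by
    rw [Measure.map_apply hΦYm hKmeas]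
    have : ΦY ⁻¹' Kset = Set.univ := Set.eq_univ_of_forall hYmem
    rw [this]; exact measure_univ
  -- second-order equality of laws
  have hinteq : (∫ f, φ₂ f ∂(P.map ΦX)) = ∫ f, φ₂ f ∂(Q.map ΦY) :=
    sub_eq_zero.mp (norm_eq_zero.mp h)
  have hΦeq : P.map ΦX = Q.map ΦY :=
    hφ₂char _ _ inferInstance inferInstance hPK hQK hinteq
  -- tower property at time 0
  have hhistX : Measurable (hist T X (0 : Fin (T + 1))) :=
    measurable_pi_lambda _ fun s => (measurable_pi_apply s.1).comp hX
  have hhistY : Measurable (hist T Y (0 : Fin (T + 1))) :=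
    measurable_pi_lambda _ fun s => (measurable_pi_apply s.1).comp hY
  have hκXm : Measurable (MX 0) := (hMX 0).2.1.mono hhistX.comap_le le_rfl
  have hκYm : Measurable (MY 0) := (hMY 0).2.1.mono hhistY.comap_le le_rfl
  have hdX : ∀ B : Set (Fin (T + 1) → E), MeasurableSet B →
      ∫⁻ ω, MX 0 ω B ∂P = (P.map X) B := by
    intro B hB
    have := (hMX 0).2.2 Set.univ MeasurableSet.univ B hB
    rwa [setLIntegral_univ, Set.univ_inter, ← Measure.map_apply hX hB] at this
  have hdY : ∀ B : Set (Fin (T + 1) → E), MeasurableSet B →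
      ∫⁻ ω, MY 0 ω B ∂Q = (Q.map Y) B := by
    intro B hB
    have := (hMY 0).2.2 Set.univ MeasurableSet.univ B hB
    rwa [setLIntegral_univ, Set.univ_inter, ← Measure.map_apply hY hB] at this
  have htX : ∫ ω, ΦX ω 0 ∂P = ∫ x, φ₁ x ∂(P.map X) := by
    have := tower_aux P (P.map X) (MX 0) hκXm (hMX 0).1 hdX φ₁ hφ₁sm C
      (fun x => hC x trivial)
    rw [← this]
    exact integral_congr_ae (Filter.Eventually.of_forall fun ω => hΦX ω 0)
  have htY : ∫ ω, ΦY ω 0 ∂Q = ∫ x, φ₁ x ∂(Q.map Y) := by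
    have := tower_aux Q (Q.map Y) (MY 0) hκYm (hMY 0).1 hdY φ₁ hφ₁sm C
      (fun x => hC x trivial)
    rw [← this]
    exact integral_congr_ae (Filter.Eventually.of_forall fun ω => hΦY ω 0)
  have hev : StronglyMeasurable (fun f : Fin (T + 1) → H₁ => f 0) :=
    (measurable_pi_apply 0).stronglyMeasurable
  have hmain : (∫ x, φ₁ x ∂(P.map X)) = ∫ x, φ₁ x ∂(Q.map Y) := by
    rw [← htX, ← htY,
      ← integral_map hΦXm.aemeasurable hev.aestronglyMeasurable,
      ← integral_map hΦYm.aemeasurable hev.aestronglyMeasurable, hΦeq]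
  exact ⟨hmain, hφ₁char _ _ inferInstance inferInstance hmain⟩
end

section
/- Let X and Y be discrete-time stochastic processes with paths in E^{T+1}, possibly defined on different probability spaces. If the law of the prediction process of X equals the law of the prediction process of Y (as Borel probability measures on 𝒫(E^{T+1})^{T+1}), then ℙ_X = ℙ_Y. (Measure-theoretic core of the implication D² = 0 ⟹ D¹ = 0 in Theorem 3.2 of the paper; the key point is that at the terminal time t = T the prediction process is almost surely the Dirac mass at the path of the process.) -/
open MeasureTheory Filter

/-- Let `X` and `Y` be discrete-time stochastic processes with paths in the
Polish path space `E^{T+1}`, possibly defined on different probability spaces, and let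
`MX`, `MY` be prediction processes of `X` and `Y` (families of regular conditional
distributions of the process given its natural filtration). If the law of the prediction
process of `X` equals the law of the prediction process of `Y`, as Borel probability measures
on `𝒫(E^{T+1})^{T+1}`, then `ℙ_X = ℙ_Y`. -/
theorem law_eq_of_prediction_law_eq
    {E : Type*} [TopologicalSpace E] [PolishSpace E] [MeasurableSpace E] [BorelSpace E]
    (T : ℕ)
    {Ω : Type*} [MeasurableSpace Ω] (P : Measure Ω) [IsProbabilityMeasure P]
    {Ω' : Type*} [MeasurableSpace Ω'] (Q : Measure Ω') [IsProbabilityMeasure Q]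
    (X : Ω → (Fin (T + 1) → E)) (hX : Measurable X)
    (Y : Ω' → (Fin (T + 1) → E)) (hY : Measurable Y)
    (MX : Fin (T + 1) → Ω → Measure (Fin (T + 1) → E))
    (hMX : ∀ t, IsRegCondDistrib P X (hist T X t) (MX t))
    (MY : Fin (T + 1) → Ω' → Measure (Fin (T + 1) → E))
    (hMY : ∀ t, IsRegCondDistrib Q Y (hist T Y t) (MY t))
    (h : P.map (fun ω t => MX t ω) = Q.map (fun ω t => MY t ω)) :
    P.map X = Q.map Y := by
  have histX : ∀ t, Measurable (hist T X t) := fun t =>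
    measurable_pi_lambda _ fun s => (measurable_pi_apply s.1).comp hX
  have histY : ∀ t, Measurable (hist T Y t) := fun t =>
    measurable_pi_lambda _ fun s => (measurable_pi_apply s.1).comp hY
  have hMXm : Measurable (fun ω t => MX t ω) :=
    measurable_pi_lambda _ fun t => ((hMX t).2.1).mono (histX t).comap_le le_rfl
  have hMYm : Measurable (fun ω t => MY t ω) :=
    measurable_pi_lambda _ fun t => ((hMY t).2.1).mono (histY t).comap_le le_rfl
  ext B hB
  have hf : Measurable (fun m : Fin (T + 1) → Measure (Fin (T + 1) → E) =>
      m (Fin.last T) B) := (Measure.measurable_coe hB).comp (measurable_pi_apply _)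
  have hPX : (P.map X) B = ∫⁻ m, m (Fin.last T) B ∂(P.map (fun ω t => MX t ω)) := by
    rw [Measure.map_apply hX hB, lintegral_map hf hMXm]
    have := (hMX (Fin.last T)).2.2 Set.univ MeasurableSet.univ B hB
    simpa using this.symm
  have hQY : (Q.map Y) B = ∫⁻ m, m (Fin.last T) B ∂(Q.map (fun ω t => MY t ω)) := by
    rw [Measure.map_apply hY hB, lintegral_map hf hMYm]
    have := (hMY (Fin.last T)).2.2 Set.univ MeasurableSet.univ B hB
    simpa using this.symm
  rw [hPX, hQY, h]
end

section
/- Let X and Y be discrete-time stochastic processes with paths in E^{T+1}, possibly defined on different probability spaces, and let 1 ≤ k < n be natural numbers. If the laws of the rank-n prediction processes coincide, ℙ_{X^{(n)}} = ℙ_{Y^{(n)}} (as Borel probability measures on P_n), then the laws of the rank-k prediction processes coincide as well: ℙ_{X^{(k)}} = ℙ_{Y^{(k)}}. (Measure-theoretic form of Theorem 3.4 of the paper: the n-th order discrepancy is finer than every lower-order one.) -/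
open MeasureTheory Filter

universe u

/-- The tower of spaces `P₀ = E^{T+1}`, `P_{n+1} = 𝒫(P_n)^{T+1}` together with their
(Giry/product) σ-algebras. -/
def PredAux (E : Type u) [MeasurableSpace E] (T : ℕ) :
    ℕ → (α : Type u) × MeasurableSpace α
  | 0 => ⟨Fin (T + 1) → E, inferInstance⟩
  | n + 1 =>
    ⟨Fin (T + 1) → @Measure (PredAux E T n).1 (PredAux E T n).2,
      @MeasurableSpace.pi _ _ fun _ => @Measure.instMeasurableSpace _ (PredAux E T n).2⟩

/-- The space `P_n` on which the rank-`n` prediction process takes its values: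
`P₀ = E^{T+1}` and `P_{n+1} = 𝒫(P_n)^{T+1}`. -/
def PredSpace (E : Type u) [MeasurableSpace E] (T : ℕ) (n : ℕ) : Type u :=
  (PredAux E T n).1

instance (E : Type u) [MeasurableSpace E] (T n : ℕ) :
    MeasurableSpace (PredSpace E T n) :=
  (PredAux E T n).2

/-- `Z` is a tower of prediction processes of `X`: `Z 0 = X` and, for each `n` and each time
`t`, `ω ↦ (Z (n+1) ω) t` is a regular conditional distribution of the `P_n`-valued random
element `Z n` given the history `(X_0, …, X_t)` of `X` up to time `t`. -/
def IsPredChain {Ω E : Type*} [MeasurableSpace Ω] [MeasurableSpace E] (T : ℕ)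
    (P : Measure Ω) (X : Ω → (Fin (T + 1) → E)) (Z : ∀ n, Ω → PredSpace E T n) : Prop :=
  Z 0 = X ∧
    ∀ (n : ℕ) (t : Fin (T + 1)),
      IsRegCondDistrib P (Z n) (hist T X t)
        (fun ω => (Z (n + 1) ω : Fin (T + 1) → Measure (PredSpace E T n)) t)


lemma measurable_hist' {Ω E : Type*} [MeasurableSpace Ω] [MeasurableSpace E] {T : ℕ}
    {X : Ω → (Fin (T + 1) → E)} (hX : Measurable X) (t : Fin (T + 1)) :
    Measurable (hist T X t) :=
  measurable_pi_lambda _ fun s => (measurable_pi_apply s.1).comp hX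

lemma measurable_eval_apply' {E : Type*} [MeasurableSpace E] {T : ℕ} (n : ℕ)
    (t : Fin (T+1)) {B : Set (PredSpace E T n)} (hB : MeasurableSet B) :
    Measurable (fun p : PredSpace E T (n+1) =>
      (p : Fin (T+1) → Measure (PredSpace E T n)) t B) :=
  (Measure.measurable_coe hB).comp (measurable_pi_apply t)

lemma measurable_chain' {Ω E : Type*} [MeasurableSpace Ω] [MeasurableSpace E] {T : ℕ}
    {P : Measure Ω} {X : Ω → (Fin (T + 1) → E)} (hX : Measurable X)
    {Z : ∀ n, Ω → PredSpace E T n} (hZ : IsPredChain T P X Z) (n : ℕ) :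
    Measurable (Z n) := by
  cases n with
  | zero => rw [hZ.1]; exact hX
  | succ m =>
    have : Measurable (fun ω => (Z (m+1) ω : Fin (T+1) → Measure (PredSpace E T m))) :=
      measurable_pi_lambda _ fun t =>
        ((hZ.2 m t).2.1).mono (measurable_iff_comap_le.mp (measurable_hist' hX t)) le_rfl
    exact this

lemma pred_step' {Ω E : Type*} [MeasurableSpace Ω] [MeasurableSpace E] {T : ℕ}
    {P : Measure Ω} {X : Ω → (Fin (T + 1) → E)}
    (hX : Measurable X) {Z : ∀ n, Ω → PredSpace E T n} (hZ : IsPredChain T P X Z) (m : ℕ)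
    {B : Set (PredSpace E T m)} (hB : MeasurableSet B) :
    P.map (Z m) B = ∫⁻ p, (p : Fin (T+1) → Measure (PredSpace E T m)) 0 B
      ∂(P.map (Z (m+1))) := by
  rw [Measure.map_apply (measurable_chain' hX hZ m) hB,
    lintegral_map (measurable_eval_apply' m 0 hB) (measurable_chain' hX hZ (m+1))]
  have := (hZ.2 m 0).2.2 Set.univ MeasurableSet.univ B hB
  rw [setLIntegral_univ, Set.univ_inter] at this
  exact this.symm


/-- Let `X` and `Y` be discrete-time stochastic processes with paths in the
Polish path space `E^{T+1}`, possibly defined on different probability spaces, with rank-`n`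
prediction process towers `ZX`, `ZY`, and let `1 ≤ k < n`. If the laws of the rank-`n`
prediction processes coincide, `ℙ_{X^{(n)}} = ℙ_{Y^{(n)}}` as Borel probability measures on
`P_n`, then the laws of the rank-`k` prediction processes coincide as well:
`ℙ_{X^{(k)}} = ℙ_{Y^{(k)}}`. -/
theorem rank_k_prediction_law_eq_of_rank_n
    {E : Type*} [TopologicalSpace E] [PolishSpace E] [MeasurableSpace E] [BorelSpace E]
    (T : ℕ)
    {Ω : Type*} [MeasurableSpace Ω] (P : Measure Ω) [IsProbabilityMeasure P]
    {Ω' : Type*} [MeasurableSpace Ω'] (Q : Measure Ω') [IsProbabilityMeasure Q]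
    (X : Ω → (Fin (T + 1) → E)) (hX : Measurable X)
    (Y : Ω' → (Fin (T + 1) → E)) (hY : Measurable Y)
    (ZX : ∀ n, Ω → PredSpace E T n) (hZX : IsPredChain T P X ZX)
    (ZY : ∀ n, Ω' → PredSpace E T n) (hZY : IsPredChain T Q Y ZY)
    (n k : ℕ) (hk : 1 ≤ k) (hkn : k < n)
    (h : P.map (ZX n) = Q.map (ZY n)) :
    P.map (ZX k) = Q.map (ZY k) := by
  obtain ⟨d, rfl⟩ : ∃ d, n = k + d := ⟨n - k, (Nat.add_sub_cancel' hkn.le).symm⟩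
  clear hkn hk
  induction d with
  | zero => exact h
  | succ d ih =>
    apply ih
    ext B hB
    rw [pred_step' hX hZX (k + d) hB, pred_step' hY hZY (k + d) hB]
    rw [show k + (d + 1) = (k + d) + 1 from rfl] at h
    rw [h]
end

section
/- The kernel mean embedding is weakly continuous: if (μ_n) is a sequence of Borel probability measures on S converging weakly to μ, then ‖M(μ_n) − M(μ)‖_H → 0. In other words, the map M : 𝒫(S) → H is continuous from the weak topology on 𝒫(S) to the norm topology on H. -/
open MeasureTheory Filter

section aux

variable {S : Type*} [MetricSpace S] [CompactSpace S] [MeasurableSpace S] [BorelSpace S]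
  {H : Type*} [NormedAddCommGroup H] [InnerProductSpace ℝ H] [CompleteSpace H]
  [SecondCountableTopology H]

lemma kme_cont (φ : S → H) (hφ : Continuous φ) :
    Continuous fun μ : ProbabilityMeasure S => ∫ x, φ x ∂(μ : Measure S) := by
  rw [continuous_iff_continuousAt]
  intro μ0
  rw [ContinuousAt, Metric.tendsto_nhds]
  intro ε hε
  -- uniform continuity
  obtain ⟨δ, hδ, hmod⟩ := Metric.uniformContinuous_iff.mp
    (CompactSpace.uniformContinuous_of_continuous hφ) (ε/4) (by linarith)
  -- finite subcover
  obtain ⟨t, ht⟩ := isCompact_univ.elim_finite_subcover (fun x : S => Metric.ball x δ)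
    (fun x => Metric.isOpen_ball) (fun x _ => Set.mem_iUnion.2 ⟨x, Metric.mem_ball_self hδ⟩)
  -- partition of unity
  set h : S → S → ℝ := fun i x => max 0 (δ - dist x i) with hh
  have hcont : ∀ i, Continuous (h i) := fun i =>
    continuous_const.max (continuous_const.sub (continuous_id.dist continuous_const))
  set Hs : S → ℝ := fun x => ∑ i ∈ t, h i x with hHs
  have hHscont : Continuous Hs := continuous_finset_sum _ fun i _ => hcont i
  have hHspos : ∀ x, 0 < Hs x := by
    intro x
    obtain ⟨i, hi, hxi⟩ := Set.mem_iUnion₂.1 (ht (Set.mem_univ x))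
    refine Finset.sum_pos' (fun j _ => le_max_left _ _) ⟨i, hi, ?_⟩
    simp only [hh, lt_max_iff]
    right; rw [Metric.mem_ball] at hxi; linarith
  set ψ : S → S → ℝ := fun i x => h i x / Hs x with hψ
  have hψcont : ∀ i, Continuous (ψ i) := fun i =>
    (hcont i).div hHscont fun x => (hHspos x).ne'
  have hψnn : ∀ i x, 0 ≤ ψ i x := fun i x =>
    div_nonneg (le_max_left _ _) (hHspos x).le
  have hψsum : ∀ x, ∑ i ∈ t, ψ i x = 1 := by
    intro x
    simp only [hψ, ← Finset.sum_div]
    exact div_self (hHspos x).ne'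
  have hψsmall : ∀ i x, ψ i x ≠ 0 → dist x i < δ := by
    intro i x hne
    by_contra hge
    apply hne
    simp only [hψ, hh, max_eq_left (by push_neg at hge; linarith : δ - dist x i ≤ 0), zero_div]
  set g : S → H := fun x => ∑ i ∈ t, ψ i x • φ i with hg
  have hgcont : Continuous g := continuous_finset_sum _ fun i _ => (hψcont i).smul continuous_const
  have hclose : ∀ x, ‖φ x - g x‖ ≤ ε/4 := by
    intro x
    have : φ x - g x = ∑ i ∈ t, ψ i x • (φ x - φ i) := by
      simp only [smul_sub, Finset.sum_sub_distrib, hg, ← Finset.sum_smul, hψsum, one_smul]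
    rw [this]
    calc ‖∑ i ∈ t, ψ i x • (φ x - φ i)‖ ≤ ∑ i ∈ t, ‖ψ i x • (φ x - φ i)‖ :=
          norm_sum_le _ _
      _ ≤ ∑ i ∈ t, ψ i x * (ε/4) := by
          apply Finset.sum_le_sum
          intro i _
          rw [norm_smul, Real.norm_eq_abs, abs_of_nonneg (hψnn i x)]
          rcases eq_or_ne (ψ i x) 0 with h0 | h0
          · simp [h0]
          · refine mul_le_mul_of_nonneg_left ?_ (hψnn i x)
            rw [← dist_eq_norm]
            exact le_of_lt (hmod (hψsmall i x h0))
      _ = ε/4 := by rw [← Finset.sum_mul, hψsum, one_mul]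
  -- integrability facts
  have hφint : ∀ ν : ProbabilityMeasure S, Integrable φ (ν : Measure S) := fun ν =>
    hφ.integrable_of_hasCompactSupport (HasCompactSupport.of_compactSpace φ)
  have hgint : ∀ ν : ProbabilityMeasure S, Integrable g (ν : Measure S) := fun ν =>
    hgcont.integrable_of_hasCompactSupport (HasCompactSupport.of_compactSpace g)
  have hψint : ∀ i (ν : ProbabilityMeasure S), Integrable (ψ i) (ν : Measure S) := fun i ν =>
    (hψcont i).integrable_of_hasCompactSupport (HasCompactSupport.of_compactSpace (ψ i))
  have hgidentity : ∀ ν : ProbabilityMeasure S,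
      ∫ x, g x ∂(ν : Measure S) = ∑ i ∈ t, (∫ x, ψ i x ∂(ν : Measure S)) • φ i := by
    intro ν
    rw [hg, integral_finset_sum _ (fun i _ => (hψint i ν).smul_const (φ i))]
    exact Finset.sum_congr rfl fun i _ => integral_smul_const _ _
  -- the error term from φ - g
  have herr : ∀ ν : ProbabilityMeasure S,
      ‖(∫ x, φ x ∂(ν : Measure S)) - ∫ x, g x ∂(ν : Measure S)‖ ≤ ε/4 := by
    intro ν
    rw [← integral_sub (hφint ν) (hgint ν)]
    calc ‖∫ x, (φ x - g x) ∂(ν : Measure S)‖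
        ≤ (ε/4) * ((ν : Measure S) Set.univ).toReal :=
          norm_integral_le_of_norm_le_const (Eventually.of_forall hclose)
      _ = ε/4 := by simp
  -- continuity of the finite-dimensional part
  have hcontsum : Continuous fun ν : ProbabilityMeasure S =>
      ∑ i ∈ t, |(∫ x, ψ i x ∂(ν : Measure S)) - ∫ x, ψ i x ∂(μ0 : Measure S)| * ‖φ i‖ := by
    apply continuous_finset_sum
    intro i _
    have : Continuous fun ν : ProbabilityMeasure S => ∫ x, ψ i x ∂(ν : Measure S) := by
      simpa using MeasureTheory.ProbabilityMeasure.continuous_integral_boundedContinuousFunction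
        (BoundedContinuousFunction.mkOfCompact ⟨ψ i, hψcont i⟩)
    exact (((this.sub continuous_const).abs).mul continuous_const)
  have hzero : (∑ i ∈ t, |(∫ x, ψ i x ∂(μ0 : Measure S)) - ∫ x, ψ i x ∂(μ0 : Measure S)| * ‖φ i‖)
      = 0 := by simp
  have hev : ∀ᶠ ν : ProbabilityMeasure S in nhds μ0,
      ∑ i ∈ t, |(∫ x, ψ i x ∂(ν : Measure S)) - ∫ x, ψ i x ∂(μ0 : Measure S)| * ‖φ i‖ < ε/4 := by
    have := hcontsum.continuousAt (x := μ0)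
    rw [ContinuousAt, hzero] at this
    exact this (Iio_mem_nhds (by linarith : (0:ℝ) < ε/4))
  filter_upwards [hev] with ν hν
  rw [dist_eq_norm]
  have key : (∫ x, φ x ∂(ν : Measure S)) - ∫ x, φ x ∂(μ0 : Measure S)
      = ((∫ x, φ x ∂(ν : Measure S)) - ∫ x, g x ∂(ν : Measure S))
        + ((∫ x, g x ∂(ν : Measure S)) - ∫ x, g x ∂(μ0 : Measure S))
        + ((∫ x, g x ∂(μ0 : Measure S)) - ∫ x, φ x ∂(μ0 : Measure S)) := by abel
  have hmid : ‖(∫ x, g x ∂(ν : Measure S)) - ∫ x, g x ∂(μ0 : Measure S)‖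
      ≤ ∑ i ∈ t, |(∫ x, ψ i x ∂(ν : Measure S)) - ∫ x, ψ i x ∂(μ0 : Measure S)| * ‖φ i‖ := by
    rw [hgidentity ν, hgidentity μ0, ← Finset.sum_sub_distrib]
    refine (norm_sum_le _ _).trans (Finset.sum_le_sum fun i _ => ?_)
    rw [← sub_smul, norm_smul, Real.norm_eq_abs]
  calc ‖(∫ x, φ x ∂(ν : Measure S)) - ∫ x, φ x ∂(μ0 : Measure S)‖
      ≤ ‖(∫ x, φ x ∂(ν : Measure S)) - ∫ x, g x ∂(ν : Measure S)‖
        + ‖(∫ x, g x ∂(ν : Measure S)) - ∫ x, g x ∂(μ0 : Measure S)‖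
        + ‖(∫ x, g x ∂(μ0 : Measure S)) - ∫ x, φ x ∂(μ0 : Measure S)‖ := by
        rw [key]; exact norm_add₃_le
    _ < ε := by
        have h1 := herr ν
        have h3 : ‖(∫ x, g x ∂(μ0 : Measure S)) - ∫ x, φ x ∂(μ0 : Measure S)‖ ≤ ε/4 := by
          rw [norm_sub_rev]; exact herr μ0
        linarith [hmid.trans_lt hν]

end aux

/-- The kernel mean embedding is weakly continuous: if a sequence of Borel
probability measures `μ n` on the compact metric space `S` converges weakly to `μ`, then
`‖M (μ n) - M μ‖ → 0`, where `M ν = ∫ φ dν`; equivalently, the map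
`M : 𝒫(S) → H` is continuous from the weak topology to the norm topology. -/
theorem kme_weakly_continuous
    {S : Type*} [MetricSpace S] [CompactSpace S] [MeasurableSpace S] [BorelSpace S]
    {H : Type*} [NormedAddCommGroup H] [InnerProductSpace ℝ H] [CompleteSpace H]
    [SecondCountableTopology H]
    (φ : S → H) (hφ : Continuous φ) :
    (∀ (μs : ℕ → ProbabilityMeasure S) (μ : ProbabilityMeasure S),
        Tendsto μs atTop (nhds μ) →
          Tendsto (fun n => ‖(∫ x, φ x ∂(μs n : Measure S)) - ∫ x, φ x ∂(μ : Measure S)‖)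
            atTop (nhds 0)) ∧
      Continuous fun μ : ProbabilityMeasure S => ∫ x, φ x ∂(μ : Measure S) := by
  have hc := kme_cont φ hφ
  refine ⟨fun μs μ hμ => ?_, hc⟩
  have := (hc.tendsto μ).comp hμ
  exact tendsto_iff_norm_sub_tendsto_zero.mp this
end

section
/- Consistency of the empirical maximum mean discrepancy: let μ and ν be Borel probability measures on S, let (X_i)_{i≥1} be i.i.d. S-valued random elements with law μ and (Y_j)_{j≥1} i.i.d. with law ν, all defined on a common probability space. Define the empirical discrepancy D̂_{m,n} = ‖(1/m) Σ_{i=1}^m φ(X_i) − (1/n) Σ_{j=1}^n φ(Y_j)‖_H and the population discrepancy D = ‖M(μ) − M(ν)‖_H. Then |D̂_{m,n} − D| → 0 in probability (indeed almost surely) as m, n → ∞. (Abstract core of Theorem 3.3 of the paper: the empirical estimator of the MMD built from sample mean embeddings is consistent.) -/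
open MeasureTheory Filter ProbabilityTheory

lemma aux_slln
    {S : Type*} [MetricSpace S] [CompactSpace S] [MeasurableSpace S] [BorelSpace S]
    {H : Type*} [NormedAddCommGroup H] [InnerProductSpace ℝ H] [CompleteSpace H]
    [SecondCountableTopology H]
    (φ : S → H) (hφ : Continuous φ)
    {Ω : Type*} [MeasurableSpace Ω] (P : Measure Ω) [IsProbabilityMeasure P]
    (μ : Measure S) [IsProbabilityMeasure μ]
    (Xs : ℕ → Ω → S) (hXm : ∀ i, Measurable (Xs i)) (hXd : ∀ i, P.map (Xs i) = μ)
    (hXind : iIndepFun Xs P) :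
    ∀ᵐ ω ∂P, Tendsto (fun n : ℕ => (n : ℝ)⁻¹ • (∑ i ∈ Finset.range n, φ (Xs i ω)))
      atTop (nhds (∫ x, φ x ∂μ)) := by
  borelize H
  obtain ⟨C, hC⟩ := isCompact_univ.exists_bound_of_continuousOn hφ.continuousOn
  have hmeas : ∀ i, Measurable (fun ω => φ (Xs i ω)) :=
    fun i => hφ.measurable.comp (hXm i)
  have hint : Integrable (fun ω => φ (Xs 0 ω)) P :=
    (integrable_const C).mono' (hmeas 0).aestronglyMeasurable
      (ae_of_all _ fun ω => hC _ (Set.mem_univ _))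
  have hindep : Pairwise (Function.onFun (IndepFun · · P) (fun i ω => φ (Xs i ω))) :=
    fun i j hij => (hXind.indepFun hij).comp hφ.measurable hφ.measurable
  have hident : ∀ i, IdentDistrib (fun ω => φ (Xs i ω)) (fun ω => φ (Xs 0 ω)) P P := by
    intro i
    have h0 : IdentDistrib (Xs i) (Xs 0) P P :=
      ⟨(hXm i).aemeasurable, (hXm 0).aemeasurable, by rw [hXd i, hXd 0]⟩
    exact h0.comp hφ.measurable
  have key := strong_law_ae (μ := P) (fun i ω => φ (Xs i ω)) hint hindep hident
  have hE : (∫ ω, φ (Xs 0 ω) ∂P) = ∫ x, φ x ∂μ := by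
    rw [← hXd 0, integral_map (hXm 0).aemeasurable hφ.aestronglyMeasurable]
  rwa [hE] at key

/-- Consistency of the empirical maximum mean discrepancy: if `(X i)` is an
i.i.d. sequence with law `μ` and `(Y j)` an i.i.d. sequence with law `ν`, all `S`-valued random
elements on a common probability space (with `S` a compact metric space and `φ : S → H` a
continuous feature map into a separable real Hilbert space), then the empirical discrepancy
`D̂ m n = ‖(1/m) ∑_{i<m} φ(X i) - (1/n) ∑_{j<n} φ(Y j)‖` converges to the population discrepancy
`D = ‖M μ - M ν‖` almost surely (hence in probability) as `m, n → ∞`. -/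
theorem empirical_mmd_consistent
    {S : Type*} [MetricSpace S] [CompactSpace S] [MeasurableSpace S] [BorelSpace S]
    {H : Type*} [NormedAddCommGroup H] [InnerProductSpace ℝ H] [CompleteSpace H]
    [SecondCountableTopology H]
    (φ : S → H) (hφ : Continuous φ)
    {Ω : Type*} [MeasurableSpace Ω] (P : Measure Ω) [IsProbabilityMeasure P]
    (μ ν : Measure S) [IsProbabilityMeasure μ] [IsProbabilityMeasure ν]
    (Xs Ys : ℕ → Ω → S)
    (hXm : ∀ i, Measurable (Xs i)) (hYm : ∀ j, Measurable (Ys j))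
    (hXd : ∀ i, P.map (Xs i) = μ) (hYd : ∀ j, P.map (Ys j) = ν)
    (hXind : iIndepFun Xs P)
    (hYind : iIndepFun Ys P) :
    ∀ᵐ ω ∂P,
      Tendsto
        (fun p : ℕ × ℕ =>
          |‖(p.1 : ℝ)⁻¹ • (∑ i ∈ Finset.range p.1, φ (Xs i ω)) -
              (p.2 : ℝ)⁻¹ • (∑ j ∈ Finset.range p.2, φ (Ys j ω))‖ -
            ‖(∫ x, φ x ∂μ) - ∫ x, φ x ∂ν‖|)
        atTop (nhds 0) := by
  filter_upwards [aux_slln φ hφ P μ Xs hXm hXd hXind,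
    aux_slln φ hφ P ν Ys hYm hYd hYind] with ω hX hY
  have hfst : Tendsto (fun p : ℕ × ℕ => (p.1 : ℕ)) atTop atTop := tendsto_fst.mono_left prod_atTop_atTop_eq.ge
  have hsnd : Tendsto (fun p : ℕ × ℕ => (p.2 : ℕ)) atTop atTop := tendsto_snd.mono_left prod_atTop_atTop_eq.ge
  have h1 := hX.comp hfst
  have h2 := hY.comp hsnd
  have h3 := ((h1.sub h2).norm.sub (tendsto_const_nhds (x := ‖(∫ x, φ x ∂μ) - ∫ x, φ x ∂ν‖))).abs
  simpa using h3
end
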